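/- For every k with 1 ≤ k ≤ n, the following identity (relation R_k^+) holds in F_q[x_1,…,x_n,y_1,…,y_n]: Σ_{i=0}^{k−1} Σ_{j=0}^{n−k} (−1)^{i+j+n+1} c_{k−1,i}^q · c*_{n−k,j} · u_{i−j+1}^{q^{min(i+1,j)}} = f_k^q · f*_{n+1−k}. -/

import Mathlib

open MvPolynomial

variable (F : Type) [Field F] [Fintype F] (n : ℕ)

/-- `fX F n k` is the orbit product `f_k` (1-indexed, meaningful for `1 ≤ k ≤ n`). -/
noncomputable def fX (k : ℕ) : MvPolynomial (Fin n ⊕ Fin n) F :=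
  if h : 1 ≤ k ∧ k ≤ n then
    ∏ α : Fin (k - 1) → F,
      (X (Sum.inl ⟨k - 1, by omega⟩) +
        ∑ j : Fin (k - 1), C (α j) * X (Sum.inl ⟨j.val, by omega⟩))
  else 0

/-- `fY F n k` is `f_k^*` (1-indexed), the orbit product of `y_{n+1-k}`. -/
noncomputable def fY (k : ℕ) : MvPolynomial (Fin n ⊕ Fin n) F :=
  if h : 1 ≤ k ∧ k ≤ n then
    ∏ α : Fin (k - 1) → F,
      (X (Sum.inr ⟨n - k, by omega⟩) +
        ∑ j : Fin (k - 1), C (α j) * X (Sum.inr ⟨n - 1 - j.val, by omega⟩))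
  else 0

/-- `uInv F n j` is the invariant `u_j`, for `j : ℤ`. -/
noncomputable def uInv (j : ℤ) : MvPolynomial (Fin n ⊕ Fin n) F :=
  if 0 ≤ j then ∑ k : Fin n, X (Sum.inl k) ^ (Fintype.card F) ^ j.toNat * X (Sum.inr k)
  else ∑ k : Fin n, X (Sum.inl k) * X (Sum.inr k) ^ (Fintype.card F) ^ (-j).toNat

/-- `cX F n s t` is the Dickson-type invariant `c_{s,t}` (in the `x`-variables):
the sum over strictly increasing sequences `1 ≤ j_1 < ⋯ < j_{s-t} ≤ s` (encoded as
strictly monotone functions `Fin (s-t) → Fin s`) of `∏_l f_{j_l}^{(q-1)·q^{t+l-j_l}}`. -/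
noncomputable def cX (s t : ℕ) : MvPolynomial (Fin n ⊕ Fin n) F :=
  if s ≤ n then
    ∑ g ∈ Finset.univ.filter (fun g : Fin (s - t) → Fin s => ∀ a b : Fin (s - t), a < b → g a < g b),
      ∏ l : Fin (s - t),
        fX F n ((g l).val + 1) ^ ((Fintype.card F - 1) * (Fintype.card F) ^ (t + l.val - (g l).val))
  else 0

/-- `cY F n s t` is `c_{s,t}^*` (in the `y`-variables). -/
noncomputable def cY (s t : ℕ) : MvPolynomial (Fin n ⊕ Fin n) F :=
  if s ≤ n then
    ∑ g ∈ Finset.univ.filter (fun g : Fin (s - t) → Fin s => ∀ a b : Fin (s - t), a < b → g a < g b),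
      ∏ l : Fin (s - t),
        fY F n ((g l).val + 1) ^ ((Fintype.card F - 1) * (Fintype.card F) ^ (t + l.val - (g l).val))
  else 0

/-!
Let `V_s` be the `F`-span of `w_0, …, w_{s-1}`. The subspace product `∏_{v ∈ V_s} (P + v)` is an
`F`-linear `q`-polynomial in `P`, namely `∑_t (-1)^(s-t) c_{s,t} P^(q^t)`: splitting off the last
coordinate and using `∏_{β ∈ F} (a + β b) = a^q - b^(q-1) a` turns it into the recurrence
`c_{s+1,t} = c_{s,t-1}^q + f_{s+1}^(q-1) c_{s,t}`, which the sum over strictly increasing sequences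
defining `c_{s,t}` satisfies.

Take `w = (x_1, …, x_n)` and `w* = (y_n, …, y_1)`. Then the left side of `R_k^+` is
`∑_m φ_{k-1}(x_m)^q φ*_{n-k}(y_m)`, where `φ_s`, `φ*_s` are the subspace products for `w`, `w*`.
The summand for `m < k` vanishes because `x_m ∈ V_{k-1}`, the one for `m > k` because
`y_m ∈ V*_{n-k}`, and the summand for `m = k` is `f_k^q f*_{n+1-k}`.
-/

open Finset

namespace FiniteField

theorem prod_X_add_C_eq_X_pow_card_sub_X :
    ∏ β : F, (Polynomial.X + Polynomial.C β) = Polynomial.X ^ Fintype.card F - Polynomial.X := by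
  have hq : 1 < Fintype.card F := Fintype.one_lt_card
  have hmonic : (Polynomial.X ^ Fintype.card F - Polynomial.X : Polynomial F).Monic :=
    Polynomial.monic_X_pow_sub (by rw [Polynomial.degree_X]; exact_mod_cast hq)
  have key := Polynomial.prod_multiset_X_sub_C_of_monic_of_roots_card_eq hmonic
    (by rw [roots_X_pow_card_sub_X, X_pow_card_sub_X_natDegree_eq F hq]; rfl)
  rw [roots_X_pow_card_sub_X] at key
  rw [← key]
  exact Fintype.prod_equiv (Equiv.neg F) _ _ (by simp [sub_eq_add_neg])

variable {R : Type*} [CommRing R] [Algebra F R]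

/-- The homogenization of `prod_X_add_C_eq_X_pow_card_sub_X`. -/
theorem prod_add_smul (a b : R) :
    ∏ β : F, (a + β • b) = a ^ Fintype.card F - b ^ (Fintype.card F - 1) * a := by
  have hq : Fintype.card F ≠ 0 := Fintype.card_ne_zero
  have h := Polynomial.homogenize_finsetProd (s := univ) (n := fun _ => 1)
    (p := fun β : F => Polynomial.X + Polynomial.C β)
    (fun β _ => (Polynomial.natDegree_X_add_C β).le)
  rw [prod_X_add_C_eq_X_pow_card_sub_X, sum_const, card_univ, smul_eq_mul, mul_one] at h
  have := congrArg (MvPolynomial.aeval ![a, b]) h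
  simpa [Polynomial.homogenize_X_pow, hq, Algebra.smul_def, mul_comm] using this.symm

theorem frobeniusAlgHom_pow_apply (t : ℕ) (x : R) :
    (frobeniusAlgHom F R ^ t) x = x ^ Fintype.card F ^ t := by
  induction t with
  | zero => simp
  | succ t ih => rw [pow_succ', AlgHom.mul_apply, ih, frobeniusAlgHom_apply, ← pow_mul, pow_succ]

end FiniteField

theorem StrictMono.fin_val_add_le {a b : ℕ} {g : Fin a → Fin b} (hg : StrictMono g) (l : Fin a) :
    (g l : ℕ) + a ≤ b + l := by
  obtain ⟨a, rfl⟩ := Nat.exists_eq_add_one_of_ne_zero l.pos.ne'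
  induction l using Fin.reverseInduction with
  | last => simp only [Fin.val_last]; omega
  | cast i ih =>
    have := hg (Fin.castSucc_lt_succ (i := i))
    simp only [Fin.lt_def, Fin.val_succ, Fin.val_castSucc] at this ih ⊢
    omega

namespace Fin

variable {M : Type*} [AddCommMonoid M] {m s : ℕ}

theorem sum_filter_strictMono_ne_last (h : (Fin (m + 1) → Fin (s + 1)) → M) :
    ∑ g ∈ univ.filter (fun g : Fin (m + 1) → Fin (s + 1) => StrictMono g ∧ g (last m) ≠ last s),
      h g
      = ∑ g ∈ univ.filter (fun g : Fin (m + 1) → Fin s => StrictMono g), h (castSucc ∘ g) := by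
  have hne : ∀ g ∈ univ.filter (fun g : Fin (m + 1) → Fin (s + 1) =>
      StrictMono g ∧ g (last m) ≠ last s), ∀ l, g l ≠ last s := by
    simp only [mem_filter, mem_univ, true_and]
    exact fun g hg l hl => hg.2 (last_le_iff.mp (hl ▸ hg.1.monotone (le_last l)))
  refine (sum_bij' (fun g _ => castSucc ∘ g) (fun g hg l => (g l).castPred (hne g hg l))
    ?_ ?_ ?_ ?_ fun _ _ => rfl).symm
  · intro g hg
    simp only [mem_filter, mem_univ, true_and] at hg ⊢
    exact ⟨strictMono_castSucc.comp hg, (castSucc_lt_last _).ne⟩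
  · intro g hg
    simp only [mem_filter, mem_univ, true_and] at hg ⊢
    exact strictMono_castPred_comp _ hg.1
  · exact fun g _ => rfl
  · exact fun g _ => funext fun l => by simp

theorem sum_filter_strictMono_eq_last (h : (Fin (m + 1) → Fin (s + 1)) → M) :
    ∑ g ∈ univ.filter (fun g : Fin (m + 1) → Fin (s + 1) => StrictMono g ∧ g (last m) = last s),
      h g
      = ∑ g ∈ univ.filter (fun g : Fin m → Fin s => StrictMono g),
          h (snoc (castSucc ∘ g) (last s)) := by
  have hne : ∀ g ∈ univ.filter (fun g : Fin (m + 1) → Fin (s + 1) =>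
      StrictMono g ∧ g (last m) = last s), ∀ l : Fin m, g l.castSucc ≠ last s := by
    simp only [mem_filter, mem_univ, true_and]
    exact fun g hg l => (hg.2 ▸ hg.1 (castSucc_lt_last l)).ne
  refine (sum_bij' (fun g _ => snoc (castSucc ∘ g) (last s))
    (fun g hg l => (g l.castSucc).castPred (hne g hg l)) ?_ ?_ ?_ ?_ fun _ _ => rfl).symm
  · intro g hg
    simp only [mem_filter, mem_univ, true_and] at hg ⊢
    refine ⟨?_, by simp⟩
    rw [← insertNth_last', strictMono_insertNth_iff]
    exact ⟨strictMono_castSucc.comp hg, fun i _ => castSucc_lt_last _,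
      fun i hi => absurd hi (castSucc_lt_last i).not_ge⟩
  · intro g hg
    simp only [mem_filter, mem_univ, true_and] at hg ⊢
    exact strictMono_castPred_comp _ (hg.1.comp strictMono_castSucc)
  · exact fun g _ => funext fun l => by simp
  · intro g hg
    simp only [mem_filter, mem_univ, true_and] at hg
    funext l
    refine lastCases ?_ (fun i => ?_) l <;> simp [hg.2]

theorem sum_filter_strictMono_succ (h : (Fin (m + 1) → Fin (s + 1)) → M) :
    ∑ g ∈ univ.filter (fun g : Fin (m + 1) → Fin (s + 1) => StrictMono g), h g
      = ∑ g ∈ univ.filter (fun g : Fin (m + 1) → Fin s => StrictMono g), h (castSucc ∘ g)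
        + ∑ g ∈ univ.filter (fun g : Fin m → Fin s => StrictMono g),
            h (snoc (castSucc ∘ g) (last s)) := by
  rw [← sum_filter_not_add_sum_filter _ (fun g => g (last m) = last s), filter_filter,
    filter_filter, sum_filter_strictMono_ne_last, sum_filter_strictMono_eq_last]

theorem extend_val_apply_of_lt {R : Type*} [Zero R] {n : ℕ} (v : Fin n → R) {j : ℕ}
    (h : j < n) : Function.extend Fin.val v 0 j = v ⟨j, h⟩ :=
  val_injective.extend_apply v 0 ⟨j, h⟩

end Fin

section SubspaceProd

open FiniteField

variable {R : Type*} [CommRing R] [Algebra F R] (w : ℕ → R)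

noncomputable def subspaceProd (s : ℕ) (P : R) : R :=
  ∏ α : Fin s → F, (P + ∑ j : Fin s, α j • w j)

/-- `orbitProd F w s` is `f_{s+1}` for the sequence `w`. -/
noncomputable def orbitProd (s : ℕ) : R :=
  subspaceProd F w s (w s)

/-- `dicksonCoeff F w m s` is `c_{s,s-m}` for the sequence `w`: `m` counts the factors. -/
noncomputable def dicksonCoeff (m s : ℕ) : R :=
  ∑ g ∈ univ.filter (fun g : Fin m → Fin s => StrictMono g),
    ∏ l : Fin m, orbitProd F w (g l) ^ ((Fintype.card F - 1) * Fintype.card F ^ (s - m + l - g l))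

noncomputable def dicksonSum (s : ℕ) (P : R) : R :=
  ∑ m ∈ range (s + 1), (-1) ^ m * dicksonCoeff F w m s * P ^ Fintype.card F ^ (s - m)

theorem subspaceProd_succ (s : ℕ) (P : R) :
    subspaceProd F w (s + 1) P = ∏ β : F, subspaceProd F w s (P + β • w s) := by
  rw [subspaceProd, ← (Fin.snocEquiv fun _ => F).prod_comp, Fintype.prod_prod_type]
  refine prod_congr rfl fun β _ => prod_congr rfl fun α _ => ?_
  simp [Fin.sum_univ_castSucc, add_assoc, add_comm (β • w s)]

theorem subspaceProd_eq_zero_of_lt {s j : ℕ} (hj : j < s) : subspaceProd F w s (w j) = 0 := by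
  refine prod_eq_zero (mem_univ (Pi.single ⟨j, hj⟩ (-1))) ?_
  simp [Pi.single_apply, ite_smul]

theorem dicksonCoeff_zero_left (s : ℕ) : dicksonCoeff F w 0 s = 1 := by
  simp [dicksonCoeff, filter_true_of_mem fun g _ => Subsingleton.strictMono g]

theorem dicksonCoeff_eq_zero_of_lt {m s : ℕ} (h : s < m) : dicksonCoeff F w m s = 0 :=
  sum_eq_zero fun g hg => absurd (Fin.le_of_injective g (mem_filter.mp hg).2.injective) h.not_ge

theorem dicksonCoeff_succ_succ (m s : ℕ) :
    dicksonCoeff F w (m + 1) (s + 1)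
      = dicksonCoeff F w (m + 1) s ^ Fintype.card F
        + orbitProd F w s ^ (Fintype.card F - 1) * dicksonCoeff F w m s := by
  rw [dicksonCoeff, Fin.sum_filter_strictMono_succ]
  congr 1
  · rw [dicksonCoeff, ← frobeniusAlgHom_apply F, map_sum]
    refine sum_congr rfl fun g hg => ?_
    rw [map_prod]
    refine prod_congr rfl fun l _ => ?_
    have gap := (mem_filter.mp hg).2.fin_val_add_le l
    have hms : m + 1 ≤ s := Fin.le_of_injective g (mem_filter.mp hg).2.injective
    rw [frobeniusAlgHom_apply, ← pow_mul, mul_assoc, ← pow_succ]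
    simp only [Function.comp_apply, Fin.val_castSucc]
    rw [show s + 1 - (m + 1) + (l : ℕ) - (g l : ℕ) = s - (m + 1) + l - g l + 1 by omega]
  · rw [dicksonCoeff, mul_sum]
    refine sum_congr rfl fun g hg => ?_
    have hms : m ≤ s := Fin.le_of_injective g (mem_filter.mp hg).2.injective
    rw [Fin.prod_univ_castSucc, mul_comm]
    simp only [Fin.snoc_castSucc, Fin.snoc_last, Function.comp_apply, Fin.val_castSucc,
      Fin.val_last, Nat.add_sub_add_right]
    rw [show s - m + m - s = 0 by omega, pow_zero, mul_one]

theorem dicksonSum_add_smul (s : ℕ) (P Q : R) (β : F) :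
    dicksonSum F w s (P + β • Q) = dicksonSum F w s P + β • dicksonSum F w s Q := by
  simp only [dicksonSum, ← frobeniusAlgHom_pow_apply, map_add, map_smul, mul_add, mul_smul_comm,
    sum_add_distrib, smul_sum]

theorem dicksonSum_succ (s : ℕ) (P : R) :
    dicksonSum F w (s + 1) P
      = dicksonSum F w s P ^ Fintype.card F
        - orbitProd F w s ^ (Fintype.card F - 1) * dicksonSum F w s P := by
  have hfrob : dicksonSum F w s P ^ Fintype.card F
      = ∑ m ∈ range (s + 1),
          (-1) ^ m * dicksonCoeff F w m s ^ Fintype.card F * P ^ Fintype.card F ^ (s - m + 1) := by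
    rw [dicksonSum, ← frobeniusAlgHom_apply F, map_sum]
    simp only [map_mul, map_pow, map_neg, map_one, frobeniusAlgHom_apply, ← pow_mul, ← pow_succ']
  have hshift : ∑ m ∈ range (s + 1),
      (-1) ^ (m + 1) * dicksonCoeff F w (m + 1) s ^ Fintype.card F * P ^ Fintype.card F ^ (s - m)
      = dicksonSum F w s P ^ Fintype.card F - P ^ Fintype.card F ^ (s + 1) := by
    rw [hfrob, sum_range_succ, dicksonCoeff_eq_zero_of_lt F w (Nat.lt_succ_self s),
      sum_range_succ' _ s, dicksonCoeff_zero_left]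
    refine eq_sub_of_add_eq ?_
    simp only [zero_pow Fintype.card_ne_zero, mul_zero, zero_mul, add_zero, one_pow, pow_zero,
      one_mul, Nat.sub_zero]
    congr 1
    refine sum_congr rfl fun m hm => ?_
    rw [show s - (m + 1) + 1 = s - m by grind]
  have hcross : ∑ m ∈ range (s + 1), (-1) ^ (m + 1)
      * (orbitProd F w s ^ (Fintype.card F - 1) * dicksonCoeff F w m s) * P ^ Fintype.card F ^ (s - m)
      = -(orbitProd F w s ^ (Fintype.card F - 1) * dicksonSum F w s P) := by
    rw [dicksonSum, mul_sum, ← sum_neg_distrib]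
    exact sum_congr rfl fun _ _ => by ring
  rw [dicksonSum, sum_range_succ']
  simp only [dicksonCoeff_succ_succ, dicksonCoeff_zero_left, Nat.add_sub_add_right, Nat.sub_zero,
    mul_add, add_mul, sum_add_distrib, hshift, hcross]
  ring

theorem subspaceProd_eq_dicksonSum (s : ℕ) (P : R) : subspaceProd F w s P = dicksonSum F w s P := by
  induction s generalizing P with
  | zero => simp [subspaceProd, dicksonSum, dicksonCoeff_zero_left]
  | succ s ih =>
    have hlin (β : F) :
        subspaceProd F w s (P + β • w s) = subspaceProd F w s P + β • orbitProd F w s := by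
      rw [orbitProd, ih, ih, ih, dicksonSum_add_smul]
    rw [subspaceProd_succ, prod_congr rfl fun β _ => hlin β, prod_add_smul, ih, dicksonSum_succ]

theorem subspaceProd_eq_sum_range_pow (s : ℕ) (P : R) :
    subspaceProd F w s P
      = ∑ t ∈ range (s + 1), (-1) ^ (s - t) * dicksonCoeff F w (s - t) s * P ^ Fintype.card F ^ t := by
  rw [subspaceProd_eq_dicksonSum, dicksonSum, ← sum_range_reflect]
  refine sum_congr rfl fun t ht => ?_
  rw [Nat.add_sub_cancel, Nat.sub_sub_self (Nat.le_of_lt_succ (mem_range.mp ht))]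

theorem subspaceProd_pow_card_eq_sum (s : ℕ) (P : R) :
    subspaceProd F w s P ^ Fintype.card F
      = ∑ t ∈ range (s + 1), (-1) ^ (s - t) * dicksonCoeff F w (s - t) s ^ Fintype.card F
          * P ^ Fintype.card F ^ (t + 1) := by
  rw [subspaceProd_eq_sum_range_pow, ← frobeniusAlgHom_apply F, map_sum]
  simp only [map_mul, map_pow, map_neg, map_one, frobeniusAlgHom_apply, ← pow_mul, ← pow_succ']

theorem sum_subspaceProd_pow_mul_subspaceProd {ι : Type*} [Fintype ι] (w' : ℕ → R) (x y : ι → R)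
    (s r : ℕ) :
    ∑ m, subspaceProd F w s (x m) ^ Fintype.card F * subspaceProd F w' r (y m)
      = ∑ i ∈ range (s + 1), ∑ j ∈ range (r + 1),
          (-1) ^ (s - i + (r - j)) * dicksonCoeff F w (s - i) s ^ Fintype.card F
            * dicksonCoeff F w' (r - j) r
            * ∑ m, x m ^ Fintype.card F ^ (i + 1) * y m ^ Fintype.card F ^ j := by
  simp only [subspaceProd_pow_card_eq_sum]
  simp only [subspaceProd_eq_sum_range_pow, sum_mul_sum]
  simp only [mul_sum]
  rw [sum_comm]
  refine sum_congr rfl fun i _ => ?_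
  rw [sum_comm]
  refine sum_congr rfl fun j _ => sum_congr rfl fun m _ => ?_
  ring

theorem sum_subspaceProd_pow_mul_subspaceProd_extend_rev {s r : ℕ} (h : s + 1 + r = n)
    (v u : Fin n → R) :
    ∑ m, subspaceProd F (Function.extend Fin.val v 0) s (v m) ^ Fintype.card F
        * subspaceProd F (Function.extend Fin.val (u ∘ Fin.rev) 0) r (u m)
      = orbitProd F (Function.extend Fin.val v 0) s ^ Fintype.card F
        * orbitProd F (Function.extend Fin.val (u ∘ Fin.rev) 0) r := by
  rw [sum_eq_single_of_mem ⟨s, by omega⟩ (mem_univ _)]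
  · rw [orbitProd, orbitProd, Fin.extend_val_apply_of_lt v (show s < n by omega),
      Fin.extend_val_apply_of_lt _ (show r < n by omega)]
    congr 3
    ext
    simp only [Fin.val_rev]
    omega
  · intro m _ hm
    rcases lt_or_gt_of_ne (Fin.val_ne_of_ne hm) with (hlt : m < s) | (hgt : s < m)
    · rw [← Fin.extend_val_apply_of_lt v m.isLt, subspaceProd_eq_zero_of_lt F _ hlt,
        zero_pow Fintype.card_ne_zero, zero_mul]
    · have hu : u m = Function.extend Fin.val (u ∘ Fin.rev) 0 m.rev := by
        rw [Fin.extend_val_apply_of_lt _ m.rev.isLt, Fin.eta, Function.comp_apply, Fin.rev_rev]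
      rw [hu, subspaceProd_eq_zero_of_lt F _ (by simp only [Fin.val_rev]; omega), mul_zero]

theorem dicksonCoeff_sub_eq_sum (f : ℕ → R) {s t : ℕ} (hf : ∀ j < s, f (j + 1) = orbitProd F w j)
    (ht : t ≤ s) :
    dicksonCoeff F w (s - t) s
      = ∑ g ∈ Finset.univ.filter
          (fun g : Fin (s - t) → Fin s => ∀ a b : Fin (s - t), a < b → g a < g b),
        ∏ l : Fin (s - t),
          f ((g l).val + 1) ^ ((Fintype.card F - 1) * (Fintype.card F) ^ (t + l.val - (g l).val)) := by
  rw [dicksonCoeff, Nat.sub_sub_self ht]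
  exact sum_congr rfl fun g _ => prod_congr rfl fun l _ => by rw [hf _ (g l).isLt]

end SubspaceProd

theorem fX_eq_orbitProd {k : ℕ} (hk1 : 1 ≤ k) (hk2 : k ≤ n) :
    fX F n k = orbitProd F (Function.extend Fin.val (fun i => X (.inl i)) 0) (k - 1) := by
  rw [fX, dif_pos ⟨hk1, hk2⟩, orbitProd, subspaceProd]
  refine prod_congr rfl fun α _ => ?_
  simp only [Fin.extend_val_apply_of_lt _ (show k - 1 < n by omega), MvPolynomial.C_mul']
  congr 1
  exact sum_congr rfl fun j _ => by rw [Fin.extend_val_apply_of_lt _ (by omega)]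

theorem fY_eq_orbitProd {k : ℕ} (hk1 : 1 ≤ k) (hk2 : k ≤ n) :
    fY F n k = orbitProd F (Function.extend Fin.val ((fun i => X (.inr i)) ∘ Fin.rev) 0) (k - 1) := by
  rw [fY, dif_pos ⟨hk1, hk2⟩, orbitProd, subspaceProd]
  refine prod_congr rfl fun α _ => ?_
  simp only [Fin.extend_val_apply_of_lt _ (show k - 1 < n by omega), MvPolynomial.C_mul',
    Function.comp_apply]
  congr 1
  · congr 2
    ext
    simp only [Fin.val_rev]
    omega
  · refine sum_congr rfl fun j _ => ?_
    rw [Fin.extend_val_apply_of_lt _ (by omega), Function.comp_apply]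
    congr 3
    ext
    simp only [Fin.val_rev]
    omega

theorem cX_eq_dicksonCoeff {s t : ℕ} (hs : s ≤ n) (ht : t ≤ s) :
    cX F n s t = dicksonCoeff F (Function.extend Fin.val (fun i => X (.inl i)) 0) (s - t) s := by
  rw [cX, if_pos hs, dicksonCoeff_sub_eq_sum F _ (fX F n) (fun j hj => ?_) ht]
  rw [fX_eq_orbitProd F n (by omega) (by omega), Nat.add_sub_cancel]

theorem cY_eq_dicksonCoeff {s t : ℕ} (hs : s ≤ n) (ht : t ≤ s) :
    cY F n s t
      = dicksonCoeff F (Function.extend Fin.val ((fun i => X (.inr i)) ∘ Fin.rev) 0) (s - t) s := by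
  rw [cY, if_pos hs, dicksonCoeff_sub_eq_sum F _ (fY F n) (fun j hj => ?_) ht]
  rw [fY_eq_orbitProd F n (by omega) (by omega), Nat.add_sub_cancel]

theorem uInv_pow_eq (i j : ℕ) :
    uInv F n ((i : ℤ) - j + 1) ^ Fintype.card F ^ min (i + 1) j
      = ∑ m : Fin n, X (.inl m) ^ Fintype.card F ^ (i + 1) * X (.inr m) ^ Fintype.card F ^ j := by
  rcases le_or_gt j (i + 1) with h | h
  · rw [uInv, if_pos (by omega), min_eq_right h, ← FiniteField.frobeniusAlgHom_pow_apply, map_sum]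
    refine sum_congr rfl fun m _ => ?_
    rw [map_mul, FiniteField.frobeniusAlgHom_pow_apply, FiniteField.frobeniusAlgHom_pow_apply,
      ← pow_mul, ← pow_add, show ((i : ℤ) - j + 1).toNat + j = i + 1 by omega]
  · rw [uInv, if_neg (by omega), min_eq_left h.le, ← FiniteField.frobeniusAlgHom_pow_apply, map_sum]
    refine sum_congr rfl fun m _ => ?_
    rw [map_mul, FiniteField.frobeniusAlgHom_pow_apply, FiniteField.frobeniusAlgHom_pow_apply,
      ← pow_mul, ← pow_add, show (-((i : ℤ) - j + 1)).toNat + (i + 1) = j by omega]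

/-- Relation `R_k^+`. -/
theorem relation_Rk_plus (k : ℕ) (hk1 : 1 ≤ k) (hk2 : k ≤ n) :
    ∑ i ∈ Finset.range k, ∑ j ∈ Finset.range (n - k + 1),
      (-1 : MvPolynomial (Fin n ⊕ Fin n) F) ^ (i + j + n + 1) *
        cX F n (k - 1) i ^ (Fintype.card F) * cY F n (n - k) j *
        uInv F n ((i : ℤ) - (j : ℤ) + 1) ^ (Fintype.card F ^ min (i + 1) j)
    = fX F n k ^ (Fintype.card F) * fY F n (n + 1 - k) := by
  rw [fX_eq_orbitProd F n hk1 hk2, fY_eq_orbitProd F n (by omega) (by omega),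
    show n + 1 - k - 1 = n - k by omega,
    ← sum_subspaceProd_pow_mul_subspaceProd_extend_rev F n (show k - 1 + 1 + (n - k) = n by omega),
    sum_subspaceProd_pow_mul_subspaceProd, Nat.sub_add_cancel hk1]
  refine sum_congr rfl fun i hi => sum_congr rfl fun j hj => ?_
  rw [mem_range] at hi hj
  rw [cX_eq_dicksonCoeff F n (by omega) (by omega), cY_eq_dicksonCoeff F n (by omega) (by omega),
    uInv_pow_eq, show i + j + n + 1 = k - 1 - i + (n - k - j) + 2 * (i + j + 1) by omega,
    pow_add _ _ (2 * _), pow_mul, neg_one_sq, one_pow, mul_one]
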